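/- Consider matrices A_1, …, A_N ∈ ℝ^{d×d}, symmetric positive definite matrices P_1, …, P_N, and a scalar λ_s ∈ (0,1) such that A_iᵀ P_i A_i ≼ λ_s P_i for every i ∈ {1,…,N}. Define μ_{ij} := λ_max(P_i^{-1/2} P_j P_i^{-1/2}) for i, j ∈ {1,…,N} and μ := max_{i,j} μ_{ij}, and assume μ > 1. Then every natural number τ with τ > ln μ / |ln λ_s| (in particular τ = ⌈ln μ / |ln λ_s| + ε⌉ for any ε > 0) is a stabilizing minimum dwell time: for every switching signal σ satisfying minimum dwell time τ and every x₀ ∈ ℝ^d, the solution of x(t+1) = A_{σ(t)} x(t), x(0) = x₀, converges to 0 as t → ∞. -/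

import Mathlib

open Matrix Filter

/-- The largest (real) eigenvalue of a matrix `M`, i.e. the supremum of the real roots of
its characteristic polynomial.  For a real symmetric matrix this is `λ_max(M)`. -/
noncomputable def lamMax {d : ℕ} (M : Matrix (Fin d) (Fin d) ℝ) : ℝ :=
  sSup {x : ℝ | M.charpoly.IsRoot x}

/-- The positive semidefinite square root of a positive semidefinite matrix, as defined in
Mathlib (Dec 2024) under this name; it has since been removed from Mathlib. -/
noncomputable def Matrix.PosSemidef.sqrt {n : Type*} [Fintype n] [DecidableEq n]
    {A : Matrix n n ℝ} (hA : A.PosSemidef) : Matrix n n ℝ :=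
  hA.1.eigenvectorUnitary.1 * diagonal ((↑) ∘ Real.sqrt ∘ hA.1.eigenvalues) *
  (star hA.1.eigenvectorUnitary : Matrix n n ℝ)

/-- A switching signal `σ : ℕ → Fin N` satisfies minimum dwell time `τ` if its switching
instants `0 = κ_0 < κ_1 < κ_2 < ⋯` (the times at which `σ` changes value, together with
the initial time `0`) satisfy `κ_{m+1} − κ_m ≥ τ`: equivalently, the first time `t > 0`
at which `σ` changes value is `≥ τ`, and any two times at which `σ` changes value are at
least `τ` apart. -/
def MinDwellTime {N : ℕ} (σ : ℕ → Fin N) (τ : ℕ) : Prop :=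
  (∀ t : ℕ, 0 < t → σ t ≠ σ (t - 1) → τ ≤ t) ∧
  (∀ s t : ℕ, 0 < s → s < t → σ s ≠ σ (s - 1) → σ t ≠ σ (t - 1) → τ ≤ t - s)

/-!
Along a solution, `V t = x tᵀ P_{σ t} x t` contracts by the factor `lam` at every step and grows
by at most `mu` at a switch: conjugating `P_i^{-1/2} P_j P_i^{-1/2} ≼ mu • 1` by `P_i^{1/2}` gives
`P_j ≼ mu • P_i`. Dwell time `τ` allows at most `t / τ` switches up to time `t`, so
`V t ≤ (mu ^ τ⁻¹ * lam) ^ t * V 0`, and `mu ^ τ⁻¹ * lam < 1` is the condition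
`τ > log mu / |log lam|`.
-/

open scoped MatrixOrder

namespace Matrix

variable {n : Type*} [Fintype n]

theorem PosSemidef.sqrt_eq_cfcSqrt [DecidableEq n] {A : Matrix n n ℝ} (hA : A.PosSemidef) :
    hA.sqrt = CFC.sqrt A := by
  rw [CFC.sqrt_eq_real_sqrt A hA.nonneg, cfcₙ_eq_cfc, hA.1.cfc_eq]
  rfl

theorem PosSemidef.isHermitian_sqrt [DecidableEq n] {A : Matrix n n ℝ} (hA : A.PosSemidef) :
    hA.sqrt.IsHermitian :=
  hA.sqrt_eq_cfcSqrt ▸ (nonneg_iff_posSemidef.mp (CFC.sqrt_nonneg A)).isHermitian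

theorem PosSemidef.sqrt_mul_self [DecidableEq n] {A : Matrix n n ℝ} (hA : A.PosSemidef) :
    hA.sqrt * hA.sqrt = A :=
  hA.sqrt_eq_cfcSqrt ▸ CFC.sqrt_mul_sqrt_self A hA.nonneg

theorem dotProduct_mulVec_mono {M M' : Matrix n n ℝ} (h : M ≤ M') (v : n → ℝ) :
    v ⬝ᵥ M *ᵥ v ≤ v ⬝ᵥ M' *ᵥ v := by
  have := (le_iff.mp h).dotProduct_mulVec_nonneg v
  simpa [sub_mulVec, dotProduct_sub] using this

theorem dotProduct_smul_mulVec (c : ℝ) (M : Matrix n n ℝ) (v : n → ℝ) :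
    v ⬝ᵥ (c • M) *ᵥ v = c * (v ⬝ᵥ M *ᵥ v) := by
  rw [smul_mulVec, dotProduct_smul, smul_eq_mul]

theorem mulVec_dotProduct_mulVec_mulVec (A M : Matrix n n ℝ) (v : n → ℝ) :
    (A *ᵥ v) ⬝ᵥ M *ᵥ (A *ᵥ v) = v ⬝ᵥ (Aᵀ * M * A) *ᵥ v := by
  rw [← mulVec_mulVec, ← mulVec_mulVec, dotProduct_mulVec _ Aᵀ, vecMul_transpose]

theorem mulVec_dotProduct_mulVec_le {A P Q : Matrix n n ℝ}
    {lam c : ℝ} (hc : 0 ≤ c) (hA : Aᵀ * P * A ≤ lam • P) (hQ : Q ≤ c • P) (v : n → ℝ) :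
    (A *ᵥ v) ⬝ᵥ Q *ᵥ (A *ᵥ v) ≤ c * lam * (v ⬝ᵥ P *ᵥ v) := by
  calc (A *ᵥ v) ⬝ᵥ Q *ᵥ (A *ᵥ v) ≤ c * ((A *ᵥ v) ⬝ᵥ P *ᵥ (A *ᵥ v)) := by
        simpa only [dotProduct_smul_mulVec] using dotProduct_mulVec_mono hQ (A *ᵥ v)
    _ ≤ c * (lam * (v ⬝ᵥ P *ᵥ v)) := by
        gcongr
        simpa only [mulVec_dotProduct_mulVec_mulVec, dotProduct_smul_mulVec] using
          dotProduct_mulVec_mono hA v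
    _ = c * lam * (v ⬝ᵥ P *ᵥ v) := by ring

theorem exists_pos_smul_one_le [DecidableEq n] {ι : Type*} [Finite ι] {P : ι → Matrix n n ℝ}
    (hP : ∀ i, (P i).PosDef) : ∃ e : ℝ, 0 < e ∧ ∀ i, e • (1 : Matrix n n ℝ) ≤ P i := by
  have hfin : (insert 1 (⋃ i, spectrum ℝ (P i))).Finite :=
    (Set.finite_iUnion fun i => finite_real_spectrum).insert 1
  obtain ⟨e, hmem, hmin⟩ := Set.exists_min_image _ id hfin (Set.insert_nonempty _ _)
  refine ⟨e, ?_, fun i => ?_⟩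
  · obtain rfl | he := hmem
    · exact one_pos
    obtain ⟨i, hi⟩ := Set.mem_iUnion.mp he
    exact (isStrictlyPositive_iff_posDef.mpr (hP i)).spectrum_pos hi
  · rw [← Algebra.algebraMap_eq_smul_one]
    exact algebraMap_le_of_le_spectrum
      (fun x hx => hmin x (Or.inr (Set.mem_iUnion.mpr ⟨i, hx⟩))) (hP i).isHermitian.isSelfAdjoint

end Matrix

section LamMax

variable {d : ℕ}

theorem le_lamMax {M : Matrix (Fin d) (Fin d) ℝ} {x : ℝ} (hx : x ∈ spectrum ℝ M) :
    x ≤ lamMax M :=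
  le_csSup (Polynomial.finite_setOfPred_isRoot M.charpoly_monic.ne_zero).bddAbove
    (mem_spectrum_iff_isRoot_charpoly.mp hx)

theorem Matrix.PosDef.le_smul_of_lamMax_le {Q R : Matrix (Fin d) (Fin d) ℝ} (hQ : Q.PosDef)
    (hR : R.IsHermitian) {c : ℝ}
    (hc : lamMax ((hQ.posSemidef.sqrt)⁻¹ * R * (hQ.posSemidef.sqrt)⁻¹) ≤ c) :
    R ≤ c • Q := by
  set S := hQ.posSemidef.sqrt
  have hSS : S * S = Q := hQ.posSemidef.sqrt_mul_self
  have hSh : S.IsHermitian := hQ.posSemidef.isHermitian_sqrt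
  have hS : IsUnit S.det :=
    (isUnit_iff_isUnit_det S).mp (isUnit_of_mul_isUnit_left (hSS ▸ hQ.isUnit))
  have hM : (S⁻¹ * R * S⁻¹).IsHermitian := by
    simpa only [hSh.inv.eq] using isHermitian_conjTranspose_mul_mul S⁻¹ hR
  have hle : S⁻¹ * R * S⁻¹ ≤ algebraMap ℝ _ c :=
    le_algebraMap_of_spectrum_le (fun x hx => (le_lamMax hx).trans hc) hM.isSelfAdjoint
  have := star_left_conjugate_le_conjugate hle S
  rwa [star_eq_conjTranspose, hSh.eq, Algebra.algebraMap_eq_smul_one,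
    show S * (S⁻¹ * R * S⁻¹) * S = (S * S⁻¹) * R * (S⁻¹ * S) by noncomm_ring,
    mul_nonsing_inv _ hS, nonsing_inv_mul _ hS, mul_smul_comm, smul_mul_assoc, mul_one, one_mul,
    mul_one, hSS] at this

end LamMax

theorem Finset.mul_card_le_of_separated {τ t : ℕ} {s : Finset ℕ}
    (hfirst : ∀ a ∈ s, τ ≤ a) (hgap : ∀ a ∈ s, ∀ b ∈ s, a < b → τ ≤ b - a)
    (hle : ∀ a ∈ s, a ≤ t) : τ * s.card ≤ t := by
  induction s using Finset.induction_on_max generalizing t with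
  | empty => simp
  | insert a s hlt ih =>
    have hτa : τ ≤ a := hfirst a (mem_insert_self a s)
    have hs : τ * s.card ≤ a - τ := by
      refine ih (fun b hb => hfirst b (mem_insert_of_mem hb))
        (fun b hb c hc => hgap b (mem_insert_of_mem hb) c (mem_insert_of_mem hc)) fun b hb => ?_
      have hba := hlt b hb
      have := hgap b (mem_insert_of_mem hb) a (mem_insert_self a s) hba
      omega
    rw [card_insert_of_notMem fun ha => (hlt a ha).false]
    have := hle a (mem_insert_self a s)
    rw [mul_add_one]
    omega

section Switching

variable {ι : Type*} [DecidableEq ι] (σ : ℕ → ι)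

def switchCount (t : ℕ) : ℕ :=
  ((Finset.Icc 1 t).filter fun s => σ s ≠ σ (s - 1)).card

theorem switchCount_zero : switchCount σ 0 = 0 := rfl

theorem switchCount_succ (t : ℕ) :
    switchCount σ (t + 1) = switchCount σ t + if σ (t + 1) = σ t then 0 else 1 := by
  rw [switchCount, switchCount, ← Finset.insert_Icc_right_eq_Icc_add_one (by omega),
    Finset.filter_insert]
  split_ifs <;> simp_all

theorem le_pow_switchCount_mul {V : ℕ → ℝ} {mu lam : ℝ} (hmu : 0 ≤ mu) (hlam : 0 ≤ lam)
    (hV : ∀ t, V (t + 1) ≤ mu ^ (if σ (t + 1) = σ t then 0 else 1) * lam * V t) (t : ℕ) :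
    V t ≤ mu ^ switchCount σ t * lam ^ t * V 0 := by
  induction t with
  | zero => simp [switchCount_zero]
  | succ t ih =>
    calc V (t + 1) ≤ mu ^ (if σ (t + 1) = σ t then 0 else 1) * lam * V t := hV t
      _ ≤ mu ^ (if σ (t + 1) = σ t then 0 else 1) * lam *
          (mu ^ switchCount σ t * lam ^ t * V 0) := by
        gcongr
      _ = mu ^ switchCount σ (t + 1) * lam ^ (t + 1) * V 0 := by
        rw [switchCount_succ]; ring

end Switching

theorem MinDwellTime.mul_switchCount_le {N τ : ℕ} {σ : ℕ → Fin N} (hσ : MinDwellTime σ τ)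
    (t : ℕ) : τ * switchCount σ t ≤ t := by
  refine Finset.mul_card_le_of_separated (fun a ha => ?_) (fun a ha b hb hab => ?_)
    fun a ha => (Finset.mem_Icc.mp (Finset.mem_filter.mp ha).1).2
  · obtain ⟨hmem, hsw⟩ := Finset.mem_filter.mp ha
    exact hσ.1 a (Finset.mem_Icc.mp hmem).1 hsw
  · obtain ⟨hamem, hasw⟩ := Finset.mem_filter.mp ha
    obtain ⟨-, hbsw⟩ := Finset.mem_filter.mp hb
    exact hσ.2 a b (Finset.mem_Icc.mp hamem).1 hab hasw hbsw

theorem pow_mul_pow_le_rpow_inv_mul_pow {mu lam : ℝ} {τ n t : ℕ} (hmu : 1 ≤ mu) (hlam : 0 ≤ lam)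
    (hτ : 0 < τ) (h : τ * n ≤ t) : mu ^ n * lam ^ t ≤ (mu ^ (τ⁻¹ : ℝ) * lam) ^ t := by
  rw [mul_pow, ← Real.rpow_natCast (mu ^ _), ← Real.rpow_mul (by linarith), ← Real.rpow_natCast]
  gcongr
  rw [inv_mul_eq_div, le_div_iff₀ (by exact_mod_cast hτ)]
  exact_mod_cast (mul_comm n τ).le.trans h

theorem rpow_inv_mul_lt_one {mu lam : ℝ} {τ : ℕ} (hmu : 0 < mu) (hlam0 : 0 < lam)
    (hlam1 : lam < 1) (hτ0 : 0 < τ) (hτ : Real.log mu / |Real.log lam| < τ) :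
    mu ^ (τ⁻¹ : ℝ) * lam < 1 := by
  have hlog : 0 < -Real.log lam := neg_pos.mpr (Real.log_neg hlam0 hlam1)
  rw [abs_of_neg (neg_pos.mp hlog), div_lt_iff₀ hlog] at hτ
  rw [← Real.log_neg_iff (by positivity), Real.log_mul (by positivity) hlam0.ne',
    Real.log_rpow hmu, inv_mul_eq_div, div_add' _ _ _ (by positivity)]
  exact div_neg_of_neg_of_pos (by linarith) (by exact_mod_cast hτ0)

theorem MinDwellTime.tendsto_zero {N τ : ℕ} {σ : ℕ → Fin N} (hσ : MinDwellTime σ τ)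
    {mu lam : ℝ} (hmu : 1 < mu) (hlam0 : 0 < lam) (hlam1 : lam < 1)
    (hτ : Real.log mu / |Real.log lam| < τ) {V : ℕ → ℝ} (hV0 : ∀ t, 0 ≤ V t)
    (hV : ∀ t, V (t + 1) ≤ mu ^ (if σ (t + 1) = σ t then 0 else 1) * lam * V t) :
    Tendsto V atTop (nhds 0) := by
  have hτ0 : 0 < τ := by
    have := (div_pos (Real.log_pos hmu) (abs_pos.mpr (Real.log_neg hlam0 hlam1).ne)).trans hτ
    exact_mod_cast this
  have hr := rpow_inv_mul_lt_one (by linarith) hlam0 hlam1 hτ0 hτ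
  have hgeom := (tendsto_pow_atTop_nhds_zero_of_lt_one (by positivity) hr).mul_const (V 0)
  rw [zero_mul] at hgeom
  refine squeeze_zero hV0 (fun t => ?_) hgeom
  calc V t ≤ mu ^ switchCount σ t * lam ^ t * V 0 :=
        le_pow_switchCount_mul σ (by linarith) hlam0.le hV t
    _ ≤ (mu ^ (τ⁻¹ : ℝ) * lam) ^ t * V 0 := by
        gcongr
        · exact hV0 0
        · exact pow_mul_pow_le_rpow_inv_mul_pow hmu.le hlam0.le hτ0 (hσ.mul_switchCount_le t)

theorem norm_le_sqrt_dotProduct_self {n : Type*} [Fintype n] (v : n → ℝ) :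
    ‖v‖ ≤ Real.sqrt (v ⬝ᵥ v) :=
  (pi_norm_le_iff_of_nonneg (Real.sqrt_nonneg _)).mpr fun k => Real.abs_le_sqrt <| by
    simpa [sq, dotProduct] using
      Finset.single_le_sum (fun i _ => mul_self_nonneg (v i)) (Finset.mem_univ k)

theorem tendsto_zero_of_tendsto_dotProduct_self {n α : Type*} [Fintype n] {l : Filter α}
    {x : α → n → ℝ} (h : Tendsto (fun t => x t ⬝ᵥ x t) l (nhds 0)) : Tendsto x l (nhds 0) := by
  have hsqrt := (Real.continuous_sqrt.tendsto 0).comp h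
  rw [Real.sqrt_zero] at hsqrt
  exact squeeze_zero_norm (fun t => norm_le_sqrt_dotProduct_self (x t)) hsqrt

theorem algorithm_dwell_time_is_stabilizing_general
    {d N : ℕ}
    (A P : Fin N → Matrix (Fin d) (Fin d) ℝ)
    (hP : ∀ i, (P i).PosDef)
    (lam : ℝ) (hlam0 : 0 < lam) (hlam1 : lam < 1)
    (hLyap : ∀ i, (lam • P i - (A i)ᵀ * P i * A i).PosSemidef)
    (mu : ℝ)
    (hmudef : mu = ⨆ i : Fin N, ⨆ j : Fin N,
      lamMax (((hP i).posSemidef.sqrt)⁻¹ * P j * ((hP i).posSemidef.sqrt)⁻¹))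
    (hmu1 : 1 < mu) :
    ∀ τ : ℕ, Real.log mu / |Real.log lam| < (τ : ℝ) →
      ∀ σ : ℕ → Fin N, MinDwellTime σ τ →
        ∀ (x₀ : Fin d → ℝ) (x : ℕ → Fin d → ℝ),
          x 0 = x₀ → (∀ t : ℕ, x (t + 1) = (A (σ t)).mulVec (x t)) →
          Tendsto x atTop (nhds 0) := by
  intro τ hτ σ hσ _ x _ hx
  obtain ⟨e, he, heP⟩ := exists_pos_smul_one_le hP
  have hmodes : ∀ i j, P j ≤ mu • P i := by
    intro i j
    refine (hP i).le_smul_of_lamMax_le (hP j).isHermitian ?_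
    rw [hmudef]
    apply le_ciSup_of_le _ i
    · apply le_ciSup _ j
      exact Finite.bddAbove_range _
    · exact Finite.bddAbove_range _
  set V : ℕ → ℝ := fun t => x t ⬝ᵥ P (σ t) *ᵥ x t
  have hsq : ∀ t, 0 ≤ x t ⬝ᵥ x t := fun t => by simpa using dotProduct_star_self_nonneg (x t)
  have hcoer : ∀ t, e * (x t ⬝ᵥ x t) ≤ V t := fun t => by
    simpa only [dotProduct_smul_mulVec, one_mulVec] using dotProduct_mulVec_mono (heP (σ t)) (x t)
  have hstep : ∀ t, V (t + 1) ≤ mu ^ (if σ (t + 1) = σ t then 0 else 1) * lam * V t := by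
    intro t
    simp only [V, hx t]
    refine mulVec_dotProduct_mulVec_le (by positivity) (le_iff.mpr (hLyap (σ t))) ?_ (x t)
    split_ifs with h
    · rw [h, pow_zero, one_smul]
    · rw [pow_one]
      exact hmodes _ _
  have hV := hσ.tendsto_zero hmu1 hlam0 hlam1 hτ
    (fun t => (mul_nonneg he.le (hsq t)).trans (hcoer t)) hstep
  refine tendsto_zero_of_tendsto_dotProduct_self (squeeze_zero hsq
    (fun t => (le_div_iff₀' he).mpr (hcoer t)) ?_)
  simpa using hV.div_const e

/-- Given `A_1, …, A_N`, symmetric positive definite `P_1, …, P_N` and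
`λ_s ∈ (0,1)` with `A_iᵀP_iA_i ≼ λ_s P_i` for all `i`, set
`μ_{ij} := λ_max(P_i^{-1/2} P_j P_i^{-1/2})` and `μ := max_{i,j} μ_{ij}`, and assume
`μ > 1`.  Then every `τ ∈ ℕ` with `τ > ln μ / |ln λ_s|` is a stabilizing minimum dwell
time: for every switching signal `σ` with minimum dwell time `τ` and every `x₀`, the
solution of `x(t+1) = A_{σ(t)} x(t)`, `x(0) = x₀`, converges to `0`. -/
theorem algorithm_dwell_time_is_stabilizing
    {d N : ℕ} (hd : 0 < d) (hN : 0 < N)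
    (A P : Fin N → Matrix (Fin d) (Fin d) ℝ)
    (hP : ∀ i, (P i).PosDef)
    (lam : ℝ) (hlam0 : 0 < lam) (hlam1 : lam < 1)
    (hLyap : ∀ i, (lam • P i - (A i)ᵀ * P i * A i).PosSemidef)
    (mu : ℝ)
    (hmudef : mu = ⨆ i : Fin N, ⨆ j : Fin N,
      lamMax (((hP i).posSemidef.sqrt)⁻¹ * P j * ((hP i).posSemidef.sqrt)⁻¹))
    (hmu1 : 1 < mu) :
    ∀ τ : ℕ, Real.log mu / |Real.log lam| < (τ : ℝ) →
      ∀ σ : ℕ → Fin N, MinDwellTime σ τ →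
        ∀ (x₀ : Fin d → ℝ) (x : ℕ → Fin d → ℝ),
          x 0 = x₀ → (∀ t : ℕ, x (t + 1) = (A (σ t)).mulVec (x t)) →
          Tendsto x atTop (nhds 0) :=
  algorithm_dwell_time_is_stabilizing_general A P hP lam hlam0 hlam1 hLyap mu hmudef hmu1
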